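/- A finite eulerian graph G (a finite connected simple graph with all vertex degrees even) admits a rooted 2-odd decomposition if and only if G is non-bipartite and has an even number of edges. -/

import Mathlib

open SimpleGraph

/-- An eulerian subgraph of `G`: a connected (hence vertex-nonempty) subgraph of `G`
in which every vertex has even degree. -/
def IsEulerianSubgraph {V : Type*} (G : SimpleGraph V) (H : G.Subgraph) : Prop :=
  H.Connected ∧ ∀ v ∈ H.verts, Even ((H.neighborSet v).ncard)

/-- A `k`-odd decomposition of `G`: a partition of the edge set of `G` into the edge
sets of `k` eulerian subgraphs, each having an odd number of edges. -/
def IsKOddDecomposition {V : Type*} (G : SimpleGraph V) (k : ℕ)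
    (D : Fin k → G.Subgraph) : Prop :=
  (∀ i, IsEulerianSubgraph G (D i)) ∧
  (∀ i, Odd ((D i).edgeSet.ncard)) ∧
  (∀ i j, i ≠ j → Disjoint ((D i).edgeSet) ((D j).edgeSet)) ∧
  (⋃ i, (D i).edgeSet) = G.edgeSet

/-- A rooted `k`-odd decomposition: a `k`-odd decomposition all of whose constituents
share a common vertex. -/
def IsRootedKOddDecomposition {V : Type*} (G : SimpleGraph V) (k : ℕ)
    (D : Fin k → G.Subgraph) : Prop :=
  IsKOddDecomposition G k D ∧ ∃ v : V, ∀ i, v ∈ (D i).verts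

/-!
An Euler circuit `p` of `G` has `|E(G)|` edges. If some closed subwalk `r` of `p` has odd length,
then `r` and the rest of `p` are closed trails through a common vertex that partition `E(G)`, and
the rest is odd as well when `|E(G)|` is even. If every closed subwalk of `p` is even, colouring a
vertex by the parity of the time at which `p` first reaches it is a proper 2-colouring, so `G` has
no odd cycle. Conversely, an Euler circuit of an odd constituent of a 2-odd decomposition is an odd
closed walk, which contains an odd cycle, and two odd edge counts add up to an even one.

Euler circuits exist because a longest trail is closed (all degrees are even) and, in a connected
graph, misses no edge: otherwise rotating it to a vertex with an unused incident edge and appending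
that edge would give a longer trail.
-/

theorem List.Nodup.ncard_setOf_mem {α : Type*} {l : List α} (hl : l.Nodup) :
    {a | a ∈ l}.ncard = l.length := by
  classical
  rw [← List.coe_toFinset, Set.ncard_coe_finset, List.toFinset_card_of_nodup hl]

theorem List.Nodup.ncard_setOf_mk_mem {V : Type*} [DecidableEq V] {l : List (Sym2 V)}
    (hl : l.Nodup) (w : V) :
    {v | s(w, v) ∈ l}.ncard = l.countP (w ∈ ·) := by
  have himage : (fun v => s(w, v)) '' {v | s(w, v) ∈ l} = {e | e ∈ l.filter (w ∈ ·)} := by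
    ext e
    induction e using Sym2.ind with
    | _ a b => grind [Sym2.eq_swap]
  rw [← Set.ncard_image_of_injective _ (fun _ _ => Sym2.congr_right.1), himage,
    (hl.filter _).ncard_setOf_mem, List.countP_eq_length_filter]

namespace SimpleGraph

variable {V : Type*} {G : SimpleGraph V}

namespace Walk

theorem IsTrail.ncard_edgeSet {u v : V} {p : G.Walk u v} (hp : p.IsTrail) :
    p.edgeSet.ncard = p.length := by
  rw [edgeSet, hp.edges_nodup.ncard_setOf_mem, length_edges]

theorem IsTrail.even_ncard_neighborSet_toSubgraph {x : V} {c : G.Walk x x} (hc : c.IsTrail)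
    (w : V) : Even (c.toSubgraph.neighborSet w).ncard := by
  classical
  have hnbr : c.toSubgraph.neighborSet w = {v | s(w, v) ∈ c.edges} := by
    ext v
    simp only [Subgraph.mem_neighborSet, Set.mem_ofPred_eq, ← Subgraph.mem_edgeSet,
      c.mem_edges_toSubgraph]
  rw [hnbr, List.Nodup.ncard_setOf_mk_mem hc.edges_nodup, hc.even_countP_edges_iff]
  exact fun h => (h rfl).elim

theorem IsTrail.isEulerianSubgraph_toSubgraph {x : V} {c : G.Walk x x} (hc : c.IsTrail) :
    IsEulerianSubgraph G c.toSubgraph :=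
  ⟨c.toSubgraph_connected, fun w _ => hc.even_ncard_neighborSet_toSubgraph w⟩

theorem IsTrail.eq_of_forall_adj_mem_edges (heven : ∀ v, Even (G.neighborSet v).ncard)
    {x u : V} {p : G.Walk x u} (hp : p.IsTrail) (hmax : ∀ w, G.Adj u w → s(u, w) ∈ p.edges) :
    x = u := by
  classical
  have hnbr : G.neighborSet u = {w | s(u, w) ∈ p.edges} :=
    Set.ext fun w => ⟨hmax w, p.adj_of_mem_edges⟩
  have hcount := heven u
  rw [hnbr, List.Nodup.ncard_setOf_mk_mem hp.edges_nodup, hp.even_countP_edges_iff] at hcount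
  by_contra hxu
  exact (hcount hxu).2 rfl

theorem IsTrail.concat {u v w : V} {p : G.Walk u v} (hp : p.IsTrail) (h : G.Adj v w)
    (hnot : s(v, w) ∉ p.edges) : (p.concat h).IsTrail := by
  simpa [isTrail_def, edges_concat, List.nodup_append, hp.edges_nodup] using
    fun e he (hev : e = s(v, w)) => hnot (hev ▸ he)

theorem exists_mem_support_adj_notMem_edges (hconn : G.Connected) {x u : V} (p : G.Walk x u)
    {e : Sym2 V} (he : e ∈ G.edgeSet) (hne : e ∉ p.edges) :
    ∃ y ∈ p.support, ∃ z, G.Adj y z ∧ s(y, z) ∉ p.edges := by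
  induction e using Sym2.ind with
  | _ a b =>
  by_cases ha : a ∈ p.support
  · exact ⟨a, ha, b, he, hne⟩
  obtain ⟨d, -, hd, hd'⟩ :=
    (hconn x a).some.exists_boundary_dart {v | v ∈ p.support} p.start_mem_support ha
  exact ⟨d.fst, hd, d.snd, d.adj, fun h => hd' (p.snd_mem_support_of_mem_edges h)⟩

theorem IsEulerian.length_eq_ncard_edgeSet [DecidableEq V] {u v : V} {p : G.Walk u v}
    (hp : p.IsEulerian) : p.length = G.edgeSet.ncard := by
  rw [← hp.isTrail.ncard_edgeSet, hp.edgeSet_eq]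

theorem exists_isSubwalk_of_not_isPath {u v : V} {p : G.Walk u v} (hp : ¬ p.IsPath) :
    ∃ (x : V) (r : G.Walk x x), ¬ r.Nil ∧ r.IsSubwalk p := by
  classical
  induction p with
  | nil => exact absurd IsPath.nil hp
  | @cons u v' v h p ih =>
    rw [cons_isPath_iff, not_and_or, not_not] at hp
    rcases hp with hp | hu
    · obtain ⟨x, r, hr, hsub⟩ := ih hp
      exact ⟨x, r, hr, hsub.trans (isSubwalk_cons p h)⟩
    · exact ⟨u, cons h (p.takeUntil u hu), not_nil_cons,
        nil, p.dropUntil u hu, by simp [take_spec]⟩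

theorem exists_isCycle_odd_length {u : V} (w : G.Walk u u) (hw : Odd w.length) :
    ∃ (x : V) (c : G.Walk x x), c.IsCycle ∧ Odd c.length := by
  induction hn : w.length using Nat.strong_induction_on generalizing u w with
  | _ n ih =>
  subst hn
  cases w with
  | nil => simp at hw
  | cons h p =>
    by_cases hp : p.IsPath
    · refine ⟨u, cons h p, (cons_isCycle_iff p h).2 ⟨hp, fun he => ?_⟩, hw⟩
      have := hp.length_eq_one_of_mem_edges (Sym2.eq_swap ▸ he)
      simp [this, Nat.odd_iff] at hw
    obtain ⟨x, r, hr, hsub⟩ := exists_isSubwalk_of_not_isPath hp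
    have hrp := length_le_of_isSubwalk hsub
    obtain ⟨ru, rv, hw'⟩ := hsub.trans (isSubwalk_cons p h)
    have hlen : (cons h p).length = r.length + (ru.append rv).length := by
      rw [hw']; simp only [length_append]; omega
    have hr0 := not_nil_iff_lt_length.1 hr
    rcases Nat.even_or_odd r.length with hre | hro
    · rw [hlen] at hw
      exact ih _ (by omega) (ru.append rv) ((Nat.odd_add'.1 hw).2 hre) rfl
    · exact ih _ (by simp only [length_cons]; omega) r hro rfl

theorem exists_eq_append_cons_of_mem_darts {u v : V} {p : G.Walk u v} {d : G.Dart}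
    (hd : d ∈ p.darts) :
    ∃ (q : G.Walk u d.fst) (s : G.Walk d.snd v), p = q.append (cons d.adj s) := by
  induction p with
  | nil => simp at hd
  | cons h p ih =>
    rw [darts_cons, List.mem_cons] at hd
    rcases hd with rfl | hd
    · exact ⟨nil, p, rfl⟩
    · obtain ⟨q, s, rfl⟩ := ih hd
      exact ⟨cons h q, s, rfl⟩

theorem even_length_iff_even_length_takeUntil [DecidableEq V] {u v y : V} {p : G.Walk u v}
    (h : ∀ (x : V) (r : G.Walk x x), r.IsSubwalk p → Even r.length)
    {q : G.Walk u y} {t : G.Walk y v} (hp : p = q.append t) (hy : y ∈ p.support) :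
    Even q.length ↔ Even (p.takeUntil y hy).length := by
  subst hp
  have hq := q.end_mem_support
  have hdrop : Even (q.dropUntil y hq).length :=
    h y _ ⟨q.takeUntil y hq, t, by rw [take_spec]⟩
  rw [takeUntil_append_of_mem_left _ _ hq]
  conv_lhs => rw [← q.take_spec hq, length_append]
  simp [Nat.even_add, hdrop]

theorem IsEulerian.colorable_two [DecidableEq V] {u v : V} {p : G.Walk u v} (hp : p.IsEulerian)
    (h : ∀ (x : V) (r : G.Walk x x), r.IsSubwalk p → Even r.length) : G.Colorable 2 := by
  let col : V → Bool := fun y =>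
    if hy : y ∈ p.support then decide (Even (p.takeUntil y hy).length) else false
  have hdart : ∀ d ∈ p.darts, col d.fst ≠ col d.snd := by
    intro d hd
    have hfst := p.dart_fst_mem_support_of_mem_darts hd
    have hsnd := p.dart_snd_mem_support_of_mem_darts hd
    obtain ⟨q, s, hqs⟩ := exists_eq_append_cons_of_mem_darts hd
    have h1 := even_length_iff_even_length_takeUntil h hqs hfst
    have h2 := even_length_iff_even_length_takeUntil h (q := q.concat d.adj) (t := s)
      (by rw [concat_append]; exact hqs) hsnd
    simp only [col, dif_pos hfst, dif_pos hsnd, ne_eq, decide_eq_decide, ← h1, ← h2,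
      length_concat, Nat.even_add_one]
    tauto
  refine (Coloring.mk col fun {a b} hab => ?_).colorable
  obtain ⟨d, hd, hde⟩ := List.mem_map.1 (hp.mem_edges_iff.2 (G.mem_edgeSet.2 hab))
  rcases dart_edge_eq_mk'_iff'.1 hde with ⟨rfl, rfl⟩ | ⟨rfl, rfl⟩
  · exact hdart d hd
  · exact (hdart d hd).symm

end Walk

theorem exists_isTrail_forall_length_le [Fintype G.edgeSet] [Nonempty V] :
    ∃ (x u : V) (p : G.Walk x u), p.IsTrail ∧
      ∀ (x' u' : V) (q : G.Walk x' u'), q.IsTrail → q.length ≤ p.length := by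
  classical
  let P n := ∃ (x u : V) (p : G.Walk x u), p.IsTrail ∧ p.length = n
  have hP : ∀ (x u : V) (q : G.Walk x u), q.IsTrail → P q.length :=
    fun x u q hq => ⟨x, u, q, hq, rfl⟩
  obtain ⟨x, u, p, hp, hlen⟩ := Nat.findGreatest_spec (P := P) (n := G.edgeFinset.card)
    (Nat.zero_le _) (hP _ _ _ (Walk.IsTrail.nil (u := Classical.arbitrary V)))
  exact ⟨x, u, p, hp, fun x' u' q hq =>
    hlen ▸ Nat.le_findGreatest hq.length_le_card_edgeFinset (hP x' u' q hq)⟩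

theorem Connected.exists_isEulerian [DecidableEq V] [Fintype G.edgeSet] (hconn : G.Connected)
    (heven : ∀ v, Even (G.neighborSet v).ncard) : ∃ (v : V) (c : G.Walk v v), c.IsEulerian := by
  have := hconn.nonempty
  obtain ⟨x, u, p, hp, hmax⟩ := exists_isTrail_forall_length_le (G := G)
  have hext : ∀ {w y z : V} (c : G.Walk w y), c.IsTrail → c.length = p.length → G.Adj y z →
      s(y, z) ∈ c.edges := by
    intro w y z c hc hlen hyz
    by_contra hnot
    have := hmax _ _ (c.concat hyz) (hc.concat hyz hnot)
    simp only [Walk.length_concat] at this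
    omega
  obtain rfl := hp.eq_of_forall_adj_mem_edges heven fun w => hext p hp rfl
  refine ⟨x, p, hp.isEulerian_of_forall_mem fun e he => ?_⟩
  by_contra hne
  obtain ⟨y, hy, z, hyz, hnot⟩ := p.exists_mem_support_adj_notMem_edges hconn he hne
  exact hnot ((p.rotate_edges y hy).mem_iff.1
    (hext _ (hp.rotate hy) (p.length_rotate y hy) hyz))

theorem Subgraph.ncard_neighborSet_coe (H : G.Subgraph) (v : H.verts) :
    (H.coe.neighborSet v).ncard = (H.neighborSet v).ncard :=
  Set.ncard_congr' (H.coeNeighborSetEquiv v)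

theorem Subgraph.ncard_edgeSet_coe (H : G.Subgraph) :
    H.coe.edgeSet.ncard = H.edgeSet.ncard := by
  rw [← H.image_coe_edgeSet_coe, Set.ncard_image_of_injective _
    (Sym2.map.injective Subtype.val_injective)]

end SimpleGraph

section Decomposition

variable {V : Type*} {G : SimpleGraph V}

theorem isKOddDecomposition_two_iff {D : Fin 2 → G.Subgraph} :
    IsKOddDecomposition G 2 D ↔
      IsEulerianSubgraph G (D 0) ∧ IsEulerianSubgraph G (D 1) ∧
      Odd (D 0).edgeSet.ncard ∧ Odd (D 1).edgeSet.ncard ∧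
      Disjoint (D 0).edgeSet (D 1).edgeSet ∧ (D 0).edgeSet ∪ (D 1).edgeSet = G.edgeSet := by
  have hunion : (⋃ i, (D i).edgeSet) = (D 0).edgeSet ∪ (D 1).edgeSet := by
    ext e; simp [Fin.exists_fin_two]
  simp only [IsKOddDecomposition, Fin.forall_fin_two, hunion, ne_eq, not_true_eq_false,
    Fin.zero_eq_one_iff, Fin.one_eq_zero_iff, false_implies, true_and, and_true, disjoint_comm]
  tauto

theorem IsKOddDecomposition.even_ncard_edgeSet {D : Fin 2 → G.Subgraph}
    (hD : IsKOddDecomposition G 2 D) : Even G.edgeSet.ncard := by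
  obtain ⟨-, -, hodd₀, hodd₁, hdisj, hunion⟩ := isKOddDecomposition_two_iff.1 hD
  rw [← hunion, Set.ncard_union_eq hdisj (Set.finite_of_ncard_pos hodd₀.pos)
    (Set.finite_of_ncard_pos hodd₁.pos)]
  exact hodd₀.add_odd hodd₁

theorem IsEulerianSubgraph.exists_closed_walk_odd_length {H : G.Subgraph}
    (hH : IsEulerianSubgraph G H) (hodd : Odd H.edgeSet.ncard) :
    ∃ (u : V) (w : G.Walk u u), Odd w.length := by
  classical
  have : Fintype H.coe.edgeSet := by
    rw [← H.ncard_edgeSet_coe] at hodd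
    exact (Set.finite_of_ncard_pos hodd.pos).fintype
  obtain ⟨u, c, hc⟩ :=
    hH.1.coe.exists_isEulerian fun v => H.ncard_neighborSet_coe v ▸ hH.2 v v.2
  refine ⟨_, c.map H.hom, ?_⟩
  rwa [Walk.length_map, hc.length_eq_ncard_edgeSet, H.ncard_edgeSet_coe]

theorem isRootedKOddDecomposition_of_isEulerian [DecidableEq V] {v x : V} {q : G.Walk v x}
    {r : G.Walk x x} {s : G.Walk x v} (hp : ((q.append r).append s).IsEulerian)
    (hr : Odd r.length) (hqs : Odd (q.append s).length) :
    IsRootedKOddDecomposition G 2 ![r.toSubgraph, (q.append s).toSubgraph] := by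
  have hperm : ((q.append r).append s).edges.Perm (r.edges ++ (q.append s).edges) := by
    simpa [Walk.edges_append] using List.perm_append_comm.append_right s.edges
  obtain ⟨hr_nodup, hqs_nodup, hdisj⟩ :=
    List.nodup_append.1 (hperm.nodup_iff.1 hp.isTrail.edges_nodup)
  have hr_trail := (Walk.isTrail_def r).2 hr_nodup
  have hqs_trail := (Walk.isTrail_def (q.append s)).2 hqs_nodup
  refine ⟨isKOddDecomposition_two_iff.2 ⟨hr_trail.isEulerianSubgraph_toSubgraph,
    hqs_trail.isEulerianSubgraph_toSubgraph, ?_, ?_, ?_, ?_⟩, x, ?_⟩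
  · simpa only [Matrix.cons_val_zero, Walk.edgeSet_toSubgraph, hr_trail.ncard_edgeSet]
  · simpa only [Matrix.cons_val_one, Matrix.cons_val_fin_one, Walk.edgeSet_toSubgraph,
      hqs_trail.ncard_edgeSet]
  · simpa [Walk.edgeSet_toSubgraph, Set.disjoint_left] using fun e he he' => hdisj e he e he' rfl
  · ext e
    simp only [Matrix.cons_val_zero, Matrix.cons_val_one, Walk.edgeSet_toSubgraph, Set.mem_union,
      Walk.mem_edgeSet, ← List.mem_append, ← hperm.mem_iff, hp.mem_edges_iff]
  · simp [Fin.forall_fin_two]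

end Decomposition

/-- An eulerian graph has a rooted 2-odd decomposition iff it is non-bipartite
(contains an odd cycle) and has an even number of edges. -/
theorem rooted2OddDecomposition_iff {V : Type*} [Fintype V] (G : SimpleGraph V)
    (hconn : G.Connected) (heven : ∀ v : V, Even ((G.neighborSet v).ncard)) :
    (∃ D : Fin 2 → G.Subgraph, IsRootedKOddDecomposition G 2 D) ↔
      ((∃ (u : V) (c : G.Walk u u), c.IsCycle ∧ Odd c.length) ∧
        Even G.edgeSet.ncard) := by
  classical
  constructor
  · rintro ⟨D, hD, -⟩
    obtain ⟨hH, -, hodd, -⟩ := isKOddDecomposition_two_iff.1 hD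
    obtain ⟨u, w, hw⟩ := hH.exists_closed_walk_odd_length hodd
    exact ⟨w.exists_isCycle_odd_length hw, hD.even_ncard_edgeSet⟩
  rintro ⟨⟨u, c, -, hc⟩, hE⟩
  obtain ⟨v, p, hp⟩ := hconn.exists_isEulerian heven
  by_cases hsplit : ∃ (x : V) (r : G.Walk x x), r.IsSubwalk p ∧ Odd r.length
  · obtain ⟨x, r, ⟨q, s, rfl⟩, hr⟩ := hsplit
    refine ⟨_, isRootedKOddDecomposition_of_isEulerian hp hr ?_⟩
    rw [← hp.length_eq_ncard_edgeSet] at hE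
    simp only [Walk.length_append, Nat.odd_iff, Nat.even_iff] at hE hr ⊢
    omega
  push Not at hsplit
  have hbip := hp.colorable_two fun x r hr => Nat.not_odd_iff_even.1 (hsplit x r hr)
  exact absurd (two_colorable_iff_forall_loop_even.1 hbip u c) (Nat.not_even_iff_odd.2 hc)
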